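/- For every g in H¹₀(D), ‖g‖² ≤ (|D|/π) ‖∇g‖², i.e. ∫_D g² dxdy ≤ (|D|/π) ∫_D |∇g|² dxdy (Poincaré inequality with the explicit constant |D|/π coming from the area of D). -/

import Mathlib

/-!
On a horizontal line through a point of `D`, the point lies in an open interval of the slice
whose endpoints are on `∂D`, where `g` vanishes; integrating the derivative from both endpoints
gives `2|g| ≤ ∫ |∂ₓg|` over the slice, and likewise `2|g| ≤ ∫ |∂ᵧg|` over the vertical slice.
Multiplying the two bounds and integrating over `D` by Fubini gives `4‖g‖² ≤ ‖∂ᵧg‖₁ ‖∂ₓg‖₁`, and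
Cauchy–Schwarz `‖f‖₁² ≤ |D| ‖f‖²` turns this into `‖g‖² ≤ (|D|/8) ‖∇g‖²`; finally `π < 8`.
-/

open MeasureTheory Real Filter Topology

/-- Partial derivative in the `x` direction. -/
noncomputable def pdx (u : ℝ × ℝ → ℝ) (p : ℝ × ℝ) : ℝ := fderiv ℝ u p (1, 0)

/-- Partial derivative in the `y` direction. -/
noncomputable def pdy (u : ℝ × ℝ → ℝ) (p : ℝ × ℝ) : ℝ := fderiv ℝ u p (0, 1)

/-- The Jacobian operator `J(u,v) = u_x v_y - u_y v_x`. -/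
noncomputable def jac (u v : ℝ × ℝ → ℝ) (p : ℝ × ℝ) : ℝ :=
  pdx u p * pdy v p - pdy u p * pdx v p

/-- The Laplacian `Δu = u_xx + u_yy`. -/
noncomputable def lap (u : ℝ × ℝ → ℝ) (p : ℝ × ℝ) : ℝ :=
  pdx (pdx u) p + pdy (pdy u) p

/-- The squared `L²(D)` norm `‖u‖² = ∫_D u² dxdy`. -/
noncomputable def l2sq (D : Set (ℝ × ℝ)) (u : ℝ × ℝ → ℝ) : ℝ :=
  ∫ p in D, (u p) ^ 2

/-- The `L²(D)` norm. -/
noncomputable def l2norm (D : Set (ℝ × ℝ)) (u : ℝ × ℝ → ℝ) : ℝ :=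
  Real.sqrt (l2sq D u)

/-- The squared `L²(D)` norm of the gradient, `‖∇u‖² = ∫_D |∇u|² dxdy`. -/
noncomputable def gradsq (D : Set (ℝ × ℝ)) (u : ℝ × ℝ → ℝ) : ℝ :=
  ∫ p in D, ((pdx u p) ^ 2 + (pdy u p) ^ 2)

/-- The `L²(D)` norm of the gradient. -/
noncomputable def gradNorm (D : Set (ℝ × ℝ)) (u : ℝ × ℝ → ℝ) : ℝ :=
  Real.sqrt (gradsq D u)

/-- The area `|D|` of the domain. -/
noncomputable def area (D : Set (ℝ × ℝ)) : ℝ := (volume D).toReal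

open Set Bornology

section FrontierInterval

variable {α : Type*} [ConditionallyCompleteLinearOrder α] [TopologicalSpace α] [OrderTopology α]
  [DenselyOrdered α] {S : Set α} {x : α}

theorem IsOpen.exists_mem_frontier_Ico_subset (hS : IsOpen S) (hx : x ∈ S) {y : α} (hxy : x ≤ y)
    (hy : y ∉ S) : ∃ b ∈ frontier S, x < b ∧ Ico x b ⊆ S := by
  have hB : BddBelow (Ici x ∩ Sᶜ) := ⟨x, fun _ ht => ht.1⟩
  obtain ⟨hxb, hbS⟩ : sInf (Ici x ∩ Sᶜ) ∈ Ici x ∩ Sᶜ :=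
    (isClosed_Ici.inter hS.isClosed_compl).csInf_mem ⟨y, hxy, hy⟩ hB
  have hlt : x < sInf (Ici x ∩ Sᶜ) := lt_of_le_of_ne hxb fun h => hbS (h ▸ hx)
  have hsub : Ico x (sInf (Ici x ∩ Sᶜ)) ⊆ S := fun t ht =>
    by_contra fun htS => (csInf_le hB ⟨ht.1, htS⟩).not_gt ht.2
  refine ⟨_, ?_, hlt, hsub⟩
  rw [hS.frontier_eq]
  exact ⟨closure_mono hsub (by rw [closure_Ico hlt.ne]; exact right_mem_Icc.2 hlt.le), hbS⟩

theorem IsOpen.exists_mem_frontier_Ioc_subset (hS : IsOpen S) (hx : x ∈ S) {y : α} (hyx : y ≤ x)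
    (hy : y ∉ S) : ∃ a ∈ frontier S, a < x ∧ Ioc a x ⊆ S := by
  obtain ⟨a, ha, hxa, hsub⟩ := IsOpen.exists_mem_frontier_Ico_subset (α := αᵒᵈ) hS hx hyx hy
  exact ⟨a, ha, hxa, fun t ht => hsub ⟨ht.2, ht.1⟩⟩

theorem IsOpen.exists_mem_frontier_Ioo_subset [NoMinOrder α] [NoMaxOrder α] (hS : IsOpen S)
    (hSl : BddBelow S) (hSu : BddAbove S) (hx : x ∈ S) :
    ∃ a ∈ frontier S, ∃ b ∈ frontier S, x ∈ Ioo a b ∧ Ioo a b ⊆ S := by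
  obtain ⟨m, hm⟩ := hSl
  obtain ⟨M, hM⟩ := hSu
  obtain ⟨y, hy⟩ := exists_lt m
  obtain ⟨z, hz⟩ := exists_gt M
  obtain ⟨a, ha, hax, hIoc⟩ := hS.exists_mem_frontier_Ioc_subset hx (hy.le.trans (hm hx))
    fun hyS => (hm hyS).not_gt hy
  obtain ⟨b, hb, hxb, hIco⟩ := hS.exists_mem_frontier_Ico_subset hx ((hM hx).trans hz.le)
    fun hzS => (hM hzS).not_gt hz
  refine ⟨a, ha, b, hb, ⟨hax, hxb⟩, fun t ht => ?_⟩
  rcases le_total t x with htx | hxt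
  exacts [hIoc ⟨ht.1, htx⟩, hIco ⟨hxt, ht.2⟩]

end FrontierInterval

theorem two_mul_abs_le_integral_abs_deriv {h h' : ℝ → ℝ} {a b x : ℝ}
    (hd : ∀ t ∈ Icc a b, HasDerivAt h (h' t) t) (hint : IntervalIntegrable h' volume a b)
    (ha : h a = 0) (hb : h b = 0) (hx : x ∈ Icc a b) :
    2 * |h x| ≤ ∫ t in a..b, |h' t| := by
  have hax : uIcc a x ⊆ uIcc a b := uIcc_subset_uIcc_left (mem_uIcc_of_le hx.1 hx.2)
  have hxb : uIcc x b ⊆ uIcc a b := uIcc_subset_uIcc_right (mem_uIcc_of_le hx.1 hx.2)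
  have hd' : ∀ t ∈ uIcc a b, HasDerivAt h (h' t) t := by rwa [uIcc_of_le (hx.1.trans hx.2)]
  have hleft : |h x| ≤ ∫ t in a..x, |h' t| := by
    rw [← sub_zero (h x), ← ha,
      ← intervalIntegral.integral_eq_sub_of_hasDerivAt (fun t ht => hd' t (hax ht))
        (hint.mono_set hax)]
    exact intervalIntegral.abs_integral_le_integral_abs hx.1
  have hright : |h x| ≤ ∫ t in x..b, |h' t| := by
    rw [← abs_neg, ← zero_sub, ← hb,
      ← intervalIntegral.integral_eq_sub_of_hasDerivAt (fun t ht => hd' t (hxb ht))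
        (hint.mono_set hxb)]
    exact intervalIntegral.abs_integral_le_integral_abs hx.2
  rw [← intervalIntegral.integral_add_adjacent_intervals (hint.abs.mono_set hax)
    (hint.abs.mono_set hxb)]
  linarith

theorem two_mul_abs_le_setIntegral_abs_fderiv_preimage {E : Type*} [NormedAddCommGroup E]
    [NormedSpace ℝ E] {D : Set E} (hD : IsOpen D) {g : E → ℝ} (hg : ContDiff ℝ 1 g)
    (hgD : ∀ p ∈ frontier D, g p = 0) {γ : ℝ → E} {v : E} (hγ : ∀ t, HasDerivAt γ v t)
    (hbdd : IsBounded (γ ⁻¹' D)) {t₀ : ℝ} (ht₀ : γ t₀ ∈ D) :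
    2 * |g (γ t₀)| ≤ ∫ t in γ ⁻¹' D, |fderiv ℝ g (γ t) v| := by
  have hγc : Continuous γ := continuous_iff_continuousAt.2 fun t => (hγ t).continuousAt
  have hderiv : Continuous fun t => fderiv ℝ g (γ t) v :=
    ((hg.continuous_fderiv one_ne_zero).comp hγc).clm_apply continuous_const
  have hzero : ∀ t ∈ frontier (γ ⁻¹' D), g (γ t) = 0 := fun t ht =>
    hgD _ (hγc.frontier_preimage_subset D ht)
  obtain ⟨a, ha, b, hb, hab, hsub⟩ :=
    (hD.preimage hγc).exists_mem_frontier_Ioo_subset hbdd.bddBelow hbdd.bddAbove ht₀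
  calc 2 * |g (γ t₀)| ≤ ∫ t in a..b, |fderiv ℝ g (γ t) v| :=
        two_mul_abs_le_integral_abs_deriv
          (fun t _ => (hg.differentiable one_ne_zero (γ t)).hasFDerivAt.comp_hasDerivAt t (hγ t))
          (hderiv.intervalIntegrable a b) (hzero a ha) (hzero b hb) (Ioo_subset_Icc_self hab)
    _ = ∫ t in Ioo a b, |fderiv ℝ g (γ t) v| := by
        rw [intervalIntegral.integral_of_le (hab.1.trans hab.2).le, integral_Ioc_eq_integral_Ioo]
    _ ≤ ∫ t in γ ⁻¹' D, |fderiv ℝ g (γ t) v| :=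
        setIntegral_mono_set
          ((hderiv.abs.locallyIntegrable.integrableOn_isCompact hbdd.isCompact_closure).mono_set
            subset_closure)
          (.of_forall fun _ => abs_nonneg _) hsub.eventuallyLE

theorem setIntegral_le_integral_mul_integral_of_le_slices {D : Set (ℝ × ℝ)} (hD : MeasurableSet D)
    {f u w : ℝ × ℝ → ℝ} (hf : IntegrableOn f D) (hu : IntegrableOn u D) (hw : IntegrableOn w D)
    (hu₀ : ∀ p ∈ D, 0 ≤ u p) (hw₀ : ∀ p ∈ D, 0 ≤ w p)
    (hle : ∀ p ∈ D, f p ≤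
      (∫ s in Prod.mk p.1 ⁻¹' D, w (p.1, s)) * ∫ t in (·, p.2) ⁻¹' D, u (t, p.2)) :
    ∫ p in D, f p ≤ (∫ p in D, w p) * ∫ p in D, u p := by
  have hU : Integrable (D.indicator u) (volume.prod volume) := by
    rw [← Measure.volume_eq_prod]; exact (integrable_indicator_iff hD).2 hu
  have hW : Integrable (D.indicator w) (volume.prod volume) := by
    rw [← Measure.volume_eq_prod]; exact (integrable_indicator_iff hD).2 hw
  set U : ℝ → ℝ := fun y => ∫ t, D.indicator u (t, y)
  set W : ℝ → ℝ := fun x => ∫ s, D.indicator w (x, s)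
  have hU₀ : ∀ y, 0 ≤ U y := fun y => integral_nonneg fun t => indicator_nonneg hu₀ _
  have hW₀ : ∀ x, 0 ≤ W x := fun x => integral_nonneg fun s => indicator_nonneg hw₀ _
  have hWU : Integrable (fun p : ℝ × ℝ => W p.1 * U p.2) := by
    rw [Measure.volume_eq_prod]; exact hW.integral_prod_left.mul_prod hU.integral_prod_right
  have hslices : ∀ p ∈ D, f p ≤ W p.1 * U p.2 := by
    intro p hp
    convert hle p hp using 2
    · rw [← integral_indicator (measurable_prodMk_left hD)]
      exact integral_congr_ae (.of_forall fun s => (indicator_comp_right (Prod.mk p.1)).symm)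
    · rw [← integral_indicator (measurable_prodMk_right hD)]
      exact integral_congr_ae (.of_forall fun t => (indicator_comp_right (·, p.2)).symm)
  calc ∫ p in D, f p ≤ ∫ p in D, W p.1 * U p.2 := setIntegral_mono_on hf hWU.integrableOn hD hslices
    _ ≤ ∫ p : ℝ × ℝ, W p.1 * U p.2 :=
        setIntegral_le_integral hWU (.of_forall fun p => mul_nonneg (hW₀ p.1) (hU₀ p.2))
    _ = (∫ x, W x) * ∫ y, U y := by rw [Measure.volume_eq_prod]; exact integral_prod_mul W U
    _ = (∫ p in D, w p) * ∫ p in D, u p := by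
        rw [← integral_prod _ hW, ← integral_prod_symm _ hU, ← Measure.volume_eq_prod,
          integral_indicator hD, integral_indicator hD]

theorem sq_integral_le_measureReal_univ_mul_integral_sq {α : Type*} [MeasurableSpace α]
    {μ : Measure α} [IsFiniteMeasure μ] {f : α → ℝ} (hf : Integrable f μ)
    (hf2 : Integrable (fun x => f x ^ 2) μ) :
    (∫ x, f x ∂μ) ^ 2 ≤ μ.real univ * ∫ x, f x ^ 2 ∂μ := by
  have hquad : ∀ c : ℝ,
      0 ≤ μ.real univ * (c * c) + (-2 * ∫ x, f x ∂μ) * c + ∫ x, f x ^ 2 ∂μ := by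
    intro c
    have hexp : ∫ x, (f x - c) ^ 2 ∂μ
        = μ.real univ * (c * c) + (-2 * ∫ x, f x ∂μ) * c + ∫ x, f x ^ 2 ∂μ := by
      simp_rw [sub_sq]
      rw [integral_add (f := fun x => f x ^ 2 - 2 * f x * c)
          (hf2.sub ((hf.const_mul 2).mul_const c)) (integrable_const _),
        integral_sub hf2 ((hf.const_mul 2).mul_const c), integral_mul_const, integral_const_mul,
        integral_const, smul_eq_mul]
      ring
    exact hexp ▸ integral_nonneg fun x => sq_nonneg _
  have hdisc := discrim_le_zero hquad
  rw [discrim] at hdisc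
  linarith

theorem four_mul_sq_le_mul_slice_integrals {D : Set (ℝ × ℝ)} (hD : IsOpen D)
    (hDb : IsBounded D) {g : ℝ × ℝ → ℝ} (hg : ContDiff ℝ 1 g) (hgD : ∀ p ∈ frontier D, g p = 0)
    {p : ℝ × ℝ} (hp : p ∈ D) :
    4 * g p ^ 2 ≤ (∫ s in Prod.mk p.1 ⁻¹' D, |pdy g (p.1, s)|) *
      ∫ t in (·, p.2) ⁻¹' D, |pdx g (t, p.2)| := by
  have hy : 2 * |g p| ≤ ∫ s in Prod.mk p.1 ⁻¹' D, |pdy g (p.1, s)| :=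
    two_mul_abs_le_setIntegral_abs_fderiv_preimage hD hg hgD
      (fun s => (hasDerivAt_const s p.1).prodMk (hasDerivAt_id s))
      (hDb.image_snd.subset fun s hs => ⟨_, hs, rfl⟩) hp
  have hx : 2 * |g p| ≤ ∫ t in (·, p.2) ⁻¹' D, |pdx g (t, p.2)| :=
    two_mul_abs_le_setIntegral_abs_fderiv_preimage hD hg hgD
      (fun t => (hasDerivAt_id t).prodMk (hasDerivAt_const t p.2))
      (hDb.image_fst.subset fun t ht => ⟨_, ht, rfl⟩) hp
  calc 4 * g p ^ 2 = (2 * |g p|) * (2 * |g p|) := by rw [← sq_abs (g p)]; ring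
    _ ≤ _ := mul_le_mul hy hx (by positivity) (hy.trans' (by positivity))

/-- Poincaré inequality with explicit constant `|D|/π`.
For every `g` in `H¹₀(D)`, `‖g‖² ≤ (|D|/π) ‖∇g‖²`, i.e.
`∫_D g² dxdy ≤ (|D|/π) ∫_D |∇g|² dxdy`. -/
theorem poincare_inequality
    (D : Set (ℝ × ℝ)) (hD : IsOpen D) (hDb : Bornology.IsBounded D)
    (g : ℝ × ℝ → ℝ)
    (hg : ContDiff ℝ (⊤ : ℕ∞) g)
    (hgb : ∀ p ∈ frontier D, g p = 0) :
    l2sq D g ≤ (area D / π) * gradsq D g := by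
  have hint : ∀ {f : ℝ × ℝ → ℝ}, Continuous f → IntegrableOn f D := fun hf =>
    (hf.locallyIntegrable.integrableOn_isCompact hDb.isCompact_closure).mono_set subset_closure
  have hg₁ : ContDiff ℝ 1 g := hg.of_le (by simp)
  have hdx : Continuous (pdx g) := (hg₁.continuous_fderiv one_ne_zero).clm_apply continuous_const
  have hdy : Continuous (pdy g) := (hg₁.continuous_fderiv one_ne_zero).clm_apply continuous_const
  have : IsFiniteMeasure (volume.restrict D) := isFiniteMeasure_restrict.2 hDb.measure_lt_top.ne
  have hcs : ∀ {f : ℝ × ℝ → ℝ}, Continuous f →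
      (∫ p in D, |f p|) ^ 2 ≤ area D * ∫ p in D, f p ^ 2 := fun hf => by
    show _ ≤ volume.real D * _
    simpa [sq_abs] using sq_integral_le_measureReal_univ_mul_integral_sq (hint hf.abs)
      (hint (hf.abs.pow 2))
  have hslice : 4 * l2sq D g ≤ (∫ p in D, |pdy g p|) * ∫ p in D, |pdx g p| := by
    rw [l2sq, ← integral_const_mul]
    exact setIntegral_le_integral_mul_integral_of_le_slices hD.measurableSet
      (hint ((hg.continuous.pow 2).const_mul 4)) (hint hdx.abs) (hint hdy.abs)
      (fun _ _ => abs_nonneg _) (fun _ _ => abs_nonneg _)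
      fun p hp => four_mul_sq_le_mul_slice_integrals hD hDb hg₁ hgb hp
  have hgrad : gradsq D g = (∫ p in D, pdx g p ^ 2) + ∫ p in D, pdy g p ^ 2 :=
    integral_add (hint (hdx.pow 2)) (hint (hdy.pow 2))
  have hl2₀ : 0 ≤ l2sq D g := setIntegral_nonneg hD.measurableSet fun _ _ => sq_nonneg _
  rw [div_mul_eq_mul_div, le_div_iff₀ pi_pos, hgrad]
  nlinarith [hcs hdx, hcs hdy, pi_le_four,
    sq_nonneg ((∫ p in D, |pdx g p|) - ∫ p in D, |pdy g p|)]
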